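/- Let B = ⊕_α B_α be a c₀-direct sum of C*-algebras and let E be a Hilbert B-module. Then E decomposes uniquely as a c₀-direct sum E = ⊕_α E_α, where E_α = E·B_α is a Hilbert B_α-module; distinct summands are orthogonal, and the inner product of two elements of E_α lies in B_α. -/

import Mathlib

open scoped RightActions

/-- The right Hilbert C⋆-module class as it stood in the older Mathlib (right action via
`Aᵐᵒᵖ`); the current Mathlib `CStarModule` uses a left action instead. -/
class CStarModuleRight (A E : Type*) [NonUnitalSemiring A] [StarRing A] [Module ℂ A]
    [AddCommGroup E] [Module ℂ E] [PartialOrder A] [SMul Aᵐᵒᵖ E] [Norm A] [Norm E]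
    extends Inner A E where
  inner_add_right {x} {y} {z} : inner x (y + z) = inner x y + inner x z
  inner_self_nonneg {x} : 0 ≤ inner x x
  inner_self {x} : inner x x = 0 ↔ x = 0
  inner_op_smul_right {a : A} {x y : E} : inner x (y <• a) = inner x y * a
  inner_smul_right_complex {z : ℂ} {x} {y} : inner x (z • y) = z • inner x y
  star_inner x y : star (inner x y) = inner y x
  norm_eq_sqrt_norm_inner_self x : ‖x‖ = √‖inner x x‖

/-!
Inner products `⟪x, e <• b⟫ = ⟪x, e⟫ * b` with `b ∈ I α` lie in `I α`, and by continuity so does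
`⟪x, y⟫` for every `y ∈ E·I α`. For `x ∈ E·I α` and `y ∈ E·I β` this puts `⟪y, x⟫` in `I α` and
`⟪x, y⟫` in `I β`, so `star ⟪x, y⟫ * ⟪x, y⟫ = ⟪y, x⟫ * ⟪x, y⟫ = 0` and the C⋆-identity kills
`⟪x, y⟫`.

The analytic input is that `x` lies in the closure of `x <• J` for every right ideal `J` containing
`a = ⟪x, x⟫`: for `c = f(a)` with `f(s) = t s / (t s + 1)`, functional calculus gives
`‖x - x <• c‖² = ‖g(a)‖ ≤ 1 / (4 t)` with `g(s) = s (1 - f(s))² = s / (t s + 1)²`, while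
`c = t (a - a c)` stays in `J`.
With `J = B` this is density of `⨆ α, E·I α`; with `J = I α` it shows that any competing summand
`F α` lies in `E·I α`. Conversely `e <• b ∈ F α` for `b ∈ I α`, because `z <• b = 0` whenever
`z ∈ F β` with `β ≠ α`, and the `F β` together are dense.
-/

/-- In the unitization, `a - a * c - c * a + c * (a * c) = (1 - c) a (1 - c)`. -/
lemma exists_approx_unit_of_nonneg {A : Type*} [NonUnitalCStarAlgebra A] [PartialOrder A]
    [StarOrderedRing A] {a : A} (ha : 0 ≤ a) {t : ℝ} (ht : 0 < t) :
    ∃ c : A, IsSelfAdjoint c ∧ c = t • (a - a * c) ∧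
      ‖a - a * c - c * a + c * (a * c)‖ ≤ (4 * t)⁻¹ := by
  -- the absolute value changes nothing on the spectrum but makes `f` continuous on all of `ℝ`
  obtain ⟨f, hf_def⟩ : ∃ f : ℝ → ℝ, f = fun s => t * s / (t * |s| + 1) := ⟨_, rfl⟩
  have hf : Continuous f := by rw [hf_def]; fun_prop (disch := intro; positivity)
  have hf0 : f 0 = 0 := by simp [hf_def]
  have hf_eq : ∀ s ∈ quasispectrum ℝ a, f s = t * s / (t * s + 1) ∧ t * s + 1 ≠ 0 :=
    fun s hs => by
      have := quasispectrum_nonneg_of_nonneg a ha s hs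
      exact ⟨by simp only [hf_def, abs_of_nonneg this], by positivity⟩
  obtain ⟨c, hc⟩ : ∃ c, cfcₙ f a = c := ⟨_, rfl⟩
  have hac : cfcₙ (fun s => s * f s) a = a * c := by rw [cfcₙ_mul _ _ a, cfcₙ_id' ℝ a, hc]
  have hca : cfcₙ (fun s => f s * s) a = c * a := by rw [cfcₙ_mul _ _ a, cfcₙ_id' ℝ a, hc]
  have hcac : cfcₙ (fun s => f s * (s * f s)) a = c * (a * c) := by rw [cfcₙ_mul _ _ a, hac, hc]
  refine ⟨c, hc ▸ cfcₙ_predicate f a, ?_, ?_⟩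
  · calc c = cfcₙ (fun s => t * (s - s * f s)) a := hc.symm.trans <| cfcₙ_congr fun s hs => by
          obtain ⟨hfs, hne⟩ := hf_eq s hs
          rw [hfs]
          field_simp
          ring
      _ = t • (a - a * c) := by rw [cfcₙ_const_mul t _ a, cfcₙ_sub _ _ a, cfcₙ_id' ℝ a, hac]
  · have hsub : cfcₙ (fun s => s - s * f s - f s * s) a = a - a * c - c * a := by
      rw [cfcₙ_sub _ _ a, cfcₙ_sub _ _ a, cfcₙ_id' ℝ a, hac, hca]
    calc ‖a - a * c - c * a + c * (a * c)‖
        = ‖cfcₙ (fun s => s - s * f s - f s * s + f s * (s * f s)) a‖ := by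
          rw [cfcₙ_add _ _ a, hsub, hcac]
      _ ≤ (4 * t)⁻¹ := norm_cfcₙ_le fun s hs => by
          obtain ⟨hfs, hne⟩ := hf_eq s hs
          have hs0 := quasispectrum_nonneg_of_nonneg a ha s hs
          have key : s - s * f s - f s * s + f s * (s * f s) = s / (t * s + 1) ^ 2 := by
            rw [hfs]
            field_simp
            ring
          rw [key, Real.norm_of_nonneg (by positivity), div_le_iff₀ (by positivity)]
          field_simp
          nlinarith [sq_nonneg (t * s - 1)]

namespace CStarModuleRight

section IdealSubmodule

variable {A : Type*} (E : Type*) [NonUnitalRing A] [Module ℂ A] [AddCommGroup E] [Module ℂ E]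
  [TopologicalSpace E] [ContinuousAdd E] [ContinuousConstSMul ℂ E] [SMul Aᵐᵒᵖ E]

/-- `E·J` in the paper's notation. -/
noncomputable def idealSubmodule (J : Submodule ℂ A) : Submodule ℂ E :=
  (Submodule.span ℂ {x : E | ∃ (e : E) (b : A), b ∈ J ∧ x = e <• b}).topologicalClosure

variable {E} {J : Submodule ℂ A}

lemma isClosed_idealSubmodule : IsClosed (idealSubmodule E J : Set E) :=
  Submodule.isClosed_topologicalClosure _

lemma op_smul_mem_idealSubmodule (e : E) {b : A} (hb : b ∈ J) : e <• b ∈ idealSubmodule E J :=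
  Submodule.le_topologicalClosure _ (Submodule.subset_span ⟨e, b, hb, rfl⟩)

lemma idealSubmodule_le {F : Submodule ℂ E} (hF : IsClosed (F : Set E))
    (h : ∀ e : E, ∀ b ∈ J, e <• b ∈ F) : idealSubmodule E J ≤ F :=
  Submodule.topologicalClosure_minimal _
    (Submodule.span_le.2 fun _ ⟨e, b, hb, he⟩ => he ▸ h e b hb) hF

end IdealSubmodule

variable {A E : Type*} [NonUnitalCStarAlgebra A] [PartialOrder A]
  [NormedAddCommGroup E] [NormedSpace ℂ E] [SMul Aᵐᵒᵖ E] [CStarModuleRight A E]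

lemma inner_op_smul_left {a : A} {x y : E} : inner A (x <• a) y = star a * inner A x y := by
  rw [← star_inner, inner_op_smul_right, star_mul, star_inner]

lemma inner_sub_right {x y z : E} : inner A x (y - z) = inner A x y - inner A x z :=
  eq_sub_of_add_eq (by rw [← inner_add_right, sub_add_cancel])

lemma inner_sub_left {x y z : E} : inner A (x - y) z = inner A x z - inner A y z := by
  rw [← star_inner, inner_sub_right, star_sub, star_inner, star_inner]

lemma norm_sq_eq (x : E) : ‖x‖ ^ 2 = ‖inner A x x‖ := by
  rw [norm_eq_sqrt_norm_inner_self (A := A) x, Real.sq_sqrt (norm_nonneg _)]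

lemma ext_inner_left {u v : E} (h : ∀ z : E, inner A z u = inner A z v) : u = v := by
  rw [← sub_eq_zero, ← inner_self (A := A), inner_sub_right, h, sub_self]

lemma op_smul_add (b : A) (x y : E) : (x + y) <• b = x <• b + y <• b :=
  ext_inner_left (A := A) fun z => by
    simp only [inner_op_smul_right, inner_add_right, add_mul]

lemma op_smul_smul_complex (b : A) (c : ℂ) (x : E) : (c • x) <• b = c • (x <• b) :=
  ext_inner_left (A := A) fun z => by
    simp only [inner_op_smul_right, inner_smul_right_complex, smul_mul_assoc]

lemma add_op_smul (x : E) (a b : A) : x <• (a + b) = x <• a + x <• b :=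
  ext_inner_left (A := A) fun z => by simp only [inner_op_smul_right, inner_add_right, mul_add]

lemma smul_complex_op_smul (x : E) (c : ℂ) (b : A) : x <• (c • b) = c • (x <• b) :=
  ext_inner_left (A := A) fun z => by
    simp only [inner_op_smul_right, inner_smul_right_complex, mul_smul_comm]

lemma op_smul_op_smul (x : E) (a b : A) : (x <• a) <• b = x <• (a * b) :=
  ext_inner_left (A := A) fun z => by simp only [inner_op_smul_right, mul_assoc]

lemma norm_op_smul_le (x : E) (b : A) : ‖x <• b‖ ≤ ‖x‖ * ‖b‖ := by
  refine le_of_sq_le_sq ?_ (by positivity)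
  calc ‖x <• b‖ ^ 2 = ‖star b * inner A x x * b‖ := by
        rw [norm_sq_eq (A := A), inner_op_smul_left, inner_op_smul_right, mul_assoc]
    _ ≤ ‖b‖ * ‖x‖ ^ 2 * ‖b‖ := by
        grw [norm_mul_le, norm_mul_le, norm_star, norm_sq_eq (A := A)]
    _ = (‖x‖ * ‖b‖) ^ 2 := by ring

noncomputable instance toCStarModuleMulOpposite : CStarModule Aᵐᵒᵖ E where
  inner x y := MulOpposite.op (inner A x y)
  inner_add_right := congrArg MulOpposite.op inner_add_right
  inner_self_nonneg := inner_self_nonneg (A := A)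
  inner_self := MulOpposite.op_eq_zero_iff _ |>.trans inner_self
  inner_op_smul_right := congrArg MulOpposite.op inner_op_smul_right
  inner_smul_right_complex := congrArg MulOpposite.op inner_smul_right_complex
  star_inner x y := congrArg MulOpposite.op (star_inner x y)
  norm_eq_sqrt_norm_inner_self x := norm_eq_sqrt_norm_inner_self (A := A) x

noncomputable def opSMulCLM (b : A) : E →L[ℂ] E :=
  LinearMap.mkContinuous
    { toFun := (· <• b)
      map_add' := op_smul_add b
      map_smul' := op_smul_smul_complex b } ‖b‖
    fun x => (norm_op_smul_le x b).trans_eq (mul_comm _ _)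

noncomputable def orbitCLM (x : E) : A →L[ℂ] E :=
  LinearMap.mkContinuous
    { toFun := (x <• ·)
      map_add' := add_op_smul x
      map_smul' := smul_complex_op_smul x } ‖x‖ (norm_op_smul_le x)

variable {J K : Submodule ℂ A}

lemma op_smul_mem_idealSubmodule_of_mem (hJ : ∀ b, ∀ c ∈ J, c * b ∈ J) {x : E}
    (hx : x ∈ idealSubmodule E J) (b : A) : x <• b ∈ idealSubmodule E J := by
  refine idealSubmodule_le (F := (idealSubmodule E J).comap (opSMulCLM (E := E) b).toLinearMap)
    (isClosed_idealSubmodule.preimage (opSMulCLM b).continuous) (fun e c hc => ?_) hx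
  show (e <• c) <• b ∈ idealSubmodule E J
  rw [op_smul_op_smul]
  exact op_smul_mem_idealSubmodule e (hJ b c hc)

lemma op_smul_eq_zero_of_mul_eq_zero (hJK : ∀ a ∈ J, ∀ b ∈ K, a * b = 0) {z : E}
    (hz : inner A z z ∈ J) {b : A} (hb : b ∈ K) : z <• b = 0 := by
  rw [← inner_self (A := A), inner_op_smul_left, inner_op_smul_right, hJK _ hz _ hb, mul_zero]

theorem idealSubmodule_le_of_iSup_dense {ι : Type*} (I : ι → Submodule ℂ A)
    (hIorth : ∀ α β, α ≠ β → ∀ x ∈ I α, ∀ y ∈ I β, x * y = 0) (F : ι → Submodule ℂ E)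
    (hFclosed : ∀ α, IsClosed (F α : Set E)) (hFinv : ∀ α, ∀ x ∈ F α, ∀ b : A, x <• b ∈ F α)
    (hFdense : (⨆ α, F α).topologicalClosure = ⊤) (hFmem : ∀ α, ∀ x ∈ F α, inner A x x ∈ I α)
    (α : ι) : idealSubmodule E (I α) ≤ F α := by
  refine idealSubmodule_le (hFclosed α) fun e b hb => ?_
  have : (⨆ β, F β).topologicalClosure ≤ (F α).comap (opSMulCLM (E := E) b).toLinearMap := by
    refine Submodule.topologicalClosure_minimal _ (iSup_le fun β z hz => ?_)
      ((hFclosed α).preimage (opSMulCLM b).continuous)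
    show z <• b ∈ F α
    rcases eq_or_ne β α with rfl | hβα
    · exact hFinv β z hz b
    · rw [op_smul_eq_zero_of_mul_eq_zero (hIorth β α hβα) (hFmem β z hz) hb]
      exact zero_mem _
  rw [hFdense] at this
  exact this Submodule.mem_top

variable [StarOrderedRing A]

lemma norm_inner_le (x y : E) : ‖inner A x y‖ ≤ ‖x‖ * ‖y‖ :=
  CStarModule.norm_inner_le (A := Aᵐᵒᵖ) E

noncomputable def innerRightCLM (x : E) : E →L[ℂ] A :=
  LinearMap.mkContinuous
    { toFun := inner A x
      map_add' := fun _ _ => inner_add_right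
      map_smul' := fun _ _ => inner_smul_right_complex } ‖x‖ (norm_inner_le x)

lemma inner_mem_of_mem_idealSubmodule (hJc : IsClosed (J : Set A))
    (hJ : ∀ b, ∀ c ∈ J, b * c ∈ J) (x : E) {y : E} (hy : y ∈ idealSubmodule E J) :
    inner A x y ∈ J := by
  refine idealSubmodule_le (F := J.comap (innerRightCLM (A := A) x).toLinearMap)
    (hJc.preimage (innerRightCLM x).continuous) (fun e b hb => ?_) hy
  show inner A x (e <• b) ∈ J
  rw [inner_op_smul_right]
  exact hJ _ b hb

lemma inner_eq_zero_of_mem_idealSubmodule (hJc : IsClosed (J : Set A))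
    (hJ : ∀ b, ∀ c ∈ J, b * c ∈ J) (hKc : IsClosed (K : Set A)) (hK : ∀ b, ∀ c ∈ K, b * c ∈ K)
    (hJK : ∀ a ∈ J, ∀ b ∈ K, a * b = 0) {x y : E} (hx : x ∈ idealSubmodule E J)
    (hy : y ∈ idealSubmodule E K) : inner A x y = 0 := by
  rw [← CStarRing.star_mul_self_eq_zero_iff, star_inner]
  exact hJK _ (inner_mem_of_mem_idealSubmodule hJc hJ y hx) _
    (inner_mem_of_mem_idealSubmodule hKc hK x hy)

lemma mem_closure_image_op_smul (hJ : ∀ b, ∀ c ∈ J, c * b ∈ J) {x : E}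
    (hx : inner A x x ∈ J) : x ∈ closure ((x <• ·) '' (J : Set A)) := by
  rw [Metric.mem_closure_iff]
  intro ε hε
  obtain ⟨c, hc_sa, hc_eq, hc_norm⟩ :=
    exists_approx_unit_of_nonneg (inner_self_nonneg (A := A) (x := x)) (t := (ε ^ 2)⁻¹)
      (by positivity)
  generalize ha : inner A x x = a at hx hc_eq hc_norm
  refine ⟨x <• c, ⟨c, ?_, rfl⟩, ?_⟩
  · rw [hc_eq]
    exact J.smul_of_tower_mem _ (J.sub_mem hx (hJ c a hx))
  · rw [dist_eq_norm]
    refine lt_of_pow_lt_pow_left₀ 2 hε.le ?_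
    calc ‖x - x <• c‖ ^ 2 = ‖a - a * c - c * a + c * (a * c)‖ := by
          simp only [norm_sq_eq (A := A), inner_sub_left, inner_sub_right, inner_op_smul_left,
            inner_op_smul_right, hc_sa.star_eq, ha]
          noncomm_ring
      _ ≤ (4 * (ε ^ 2)⁻¹)⁻¹ := hc_norm
      _ < ε ^ 2 := by
          rw [mul_inv, inv_inv]
          nlinarith [pow_pos hε 2]

lemma mem_idealSubmodule_of_inner_self_mem (hJ : ∀ b, ∀ c ∈ J, c * b ∈ J) {x : E}
    (hx : inner A x x ∈ J) : x ∈ idealSubmodule E J :=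
  closure_minimal (by rintro _ ⟨c, hc, rfl⟩; exact op_smul_mem_idealSubmodule x hc)
    isClosed_idealSubmodule (mem_closure_image_op_smul hJ hx)

theorem topologicalClosure_iSup_idealSubmodule_eq_top {ι : Type*} (I : ι → Submodule ℂ A)
    (hI : (⨆ α, I α).topologicalClosure = ⊤) :
    (⨆ α, idealSubmodule E (I α)).topologicalClosure = ⊤ := by
  set M := ⨆ α, idealSubmodule E (I α)
  have hxM (x : E) : ∀ b : A, x <• b ∈ M.topologicalClosure := by
    have : (⨆ α, I α).topologicalClosure ≤ M.topologicalClosure.comap (orbitCLM x).toLinearMap :=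
      Submodule.topologicalClosure_minimal _
        (iSup_le fun α b hb => M.le_topologicalClosure <|
          Submodule.mem_iSup_of_mem α (op_smul_mem_idealSubmodule x hb))
        (M.isClosed_topologicalClosure.preimage (orbitCLM x).continuous)
    rw [hI] at this
    exact fun b => this Submodule.mem_top
  refine Submodule.eq_top_iff'.2 fun x => closure_minimal ?_ M.isClosed_topologicalClosure
    (mem_closure_image_op_smul (J := (⊤ : Submodule ℂ A)) (x := x)
      (fun _ _ _ => Submodule.mem_top) Submodule.mem_top)
  rintro _ ⟨b, -, rfl⟩
  exact hxM x b

end CStarModuleRight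

/-- `B = ⊕_α B_α` is modelled by `B` together with the pairwise orthogonal closed two-sided ideals
`B_α = I α`, whose sum is dense. -/
theorem stmt_19_general {B : Type*} [NonUnitalCStarAlgebra B] [PartialOrder B] [StarOrderedRing B]
    {E : Type*} [NormedAddCommGroup E] [NormedSpace ℂ E] [SMul Bᵐᵒᵖ E] [CStarModuleRight B E]
    {ι : Type*} (I : ι → Submodule ℂ B)
    (hIclosed : ∀ α, IsClosed ((I α : Set B)))
    (hIleft : ∀ α, ∀ b : B, ∀ x ∈ I α, b * x ∈ I α)
    (hIright : ∀ α, ∀ b : B, ∀ x ∈ I α, x * b ∈ I α)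
    (hIorth : ∀ α β, α ≠ β → ∀ x ∈ I α, ∀ y ∈ I β, x * y = 0)
    (hIdense : (⨆ α, I α).topologicalClosure = ⊤)
    (Eα : ι → Submodule ℂ E)
    (hEα : ∀ α, Eα α = (Submodule.span ℂ
      {x : E | ∃ (e : E) (b : B), b ∈ I α ∧ x = e <• b}).topologicalClosure) :
    -- the summands fill out `E` densely,
    (⨆ α, Eα α).topologicalClosure = ⊤ ∧
    -- distinct summands are orthogonal,
    (∀ α β, α ≠ β → ∀ x ∈ Eα α, ∀ y ∈ Eα β, (inner B x y : B) = 0) ∧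
    -- the inner product of two elements of `E_α` lies in `B_α`,
    (∀ α, ∀ x ∈ Eα α, ∀ y ∈ Eα α, (inner B x y : B) ∈ I α) ∧
    -- each `E_α` is invariant under the `B`-action (a Hilbert `B_α`-module),
    (∀ α, ∀ x ∈ Eα α, ∀ b : B, x <• b ∈ Eα α) ∧
    -- and the decomposition is unique:
    (∀ F : ι → Submodule ℂ E,
      (∀ α, IsClosed ((F α : Set E))) →
      (∀ α, ∀ x ∈ F α, ∀ b : B, x <• b ∈ F α) →
      (⨆ α, F α).topologicalClosure = ⊤ →
      (∀ α β, α ≠ β → ∀ x ∈ F α, ∀ y ∈ F β, (inner B x y : B) = 0) →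
      (∀ α, ∀ x ∈ F α, ∀ y ∈ F α, (inner B x y : B) ∈ I α) →
      ∀ α, F α = Eα α) := by
  obtain rfl : Eα = fun α => CStarModuleRight.idealSubmodule E (I α) := funext hEα
  open CStarModuleRight in
  refine ⟨topologicalClosure_iSup_idealSubmodule_eq_top I hIdense,
    fun α β hαβ x hx y hy => inner_eq_zero_of_mem_idealSubmodule (hIclosed α) (hIleft α)
      (hIclosed β) (hIleft β) (hIorth α β hαβ) hx hy,
    fun α x _ y hy => inner_mem_of_mem_idealSubmodule (hIclosed α) (hIleft α) x hy,
    fun α x hx b => op_smul_mem_idealSubmodule_of_mem (hIright α) hx b,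
    fun F hFclosed hFinv hFdense _ hFmem α => le_antisymm
      (fun x hx => mem_idealSubmodule_of_inner_self_mem (hIright α) (hFmem α x hx x hx))
      (idealSubmodule_le_of_iSup_dense I hIorth F hFclosed hFinv hFdense
        (fun β x hx => hFmem β x hx x hx) α)⟩

/-- Let `B = ⊕_α B_α` be a c₀-direct sum of C*-algebras (modelled by a C*-algebra `B`
together with a family of pairwise orthogonal closed two-sided ideals `I α` whose sum is
dense), and let `E` be a Hilbert `B`-module.  Then `E` decomposes uniquely as the direct
sum of the closed submodules `E_α = E·B_α`: the `E_α` are pairwise orthogonal, the inner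
product of two elements of `E_α` lies in `I α`, their sum is dense in `E`, and any family
of closed invariant submodules with these properties coincides with `(E_α)`. -/
theorem stmt_19 {B : Type*} [NonUnitalCStarAlgebra B] [PartialOrder B] [StarOrderedRing B]
    {E : Type*} [NormedAddCommGroup E] [NormedSpace ℂ E] [SMul Bᵐᵒᵖ E] [CStarModuleRight B E]
    [CompleteSpace E]
    {ι : Type*} (I : ι → Submodule ℂ B)
    (hIclosed : ∀ α, IsClosed ((I α : Set B)))
    (hIleft : ∀ α, ∀ b : B, ∀ x ∈ I α, b * x ∈ I α)
    (hIright : ∀ α, ∀ b : B, ∀ x ∈ I α, x * b ∈ I α)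
    (hIorth : ∀ α β, α ≠ β → ∀ x ∈ I α, ∀ y ∈ I β, x * y = 0)
    (hIdense : (⨆ α, I α).topologicalClosure = ⊤)
    (Eα : ι → Submodule ℂ E)
    (hEα : ∀ α, Eα α = (Submodule.span ℂ
      {x : E | ∃ (e : E) (b : B), b ∈ I α ∧ x = e <• b}).topologicalClosure) :
    -- the summands fill out `E` densely,
    (⨆ α, Eα α).topologicalClosure = ⊤ ∧
    -- distinct summands are orthogonal,
    (∀ α β, α ≠ β → ∀ x ∈ Eα α, ∀ y ∈ Eα β, (inner B x y : B) = 0) ∧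
    -- the inner product of two elements of `E_α` lies in `B_α`,
    (∀ α, ∀ x ∈ Eα α, ∀ y ∈ Eα α, (inner B x y : B) ∈ I α) ∧
    -- each `E_α` is invariant under the `B`-action (a Hilbert `B_α`-module),
    (∀ α, ∀ x ∈ Eα α, ∀ b : B, x <• b ∈ Eα α) ∧
    -- and the decomposition is unique:
    (∀ F : ι → Submodule ℂ E,
      (∀ α, IsClosed ((F α : Set E))) →
      (∀ α, ∀ x ∈ F α, ∀ b : B, x <• b ∈ F α) →
      (⨆ α, F α).topologicalClosure = ⊤ →
      (∀ α β, α ≠ β → ∀ x ∈ F α, ∀ y ∈ F β, (inner B x y : B) = 0) →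
      (∀ α, ∀ x ∈ F α, ∀ y ∈ F α, (inner B x y : B) ∈ I α) →
      ∀ α, F α = Eα α) :=
  stmt_19_general I hIclosed hIleft hIright hIorth hIdense Eα hEα
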